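/- For every t ≥ 0, the graph G obtained from the triangle C_3 by attaching t pendant edges to exactly one of its vertices (family A_4) satisfies ρ_e^o(G) = m − 2 = t + 1, where m = t + 3 is the number of edges of G. -/
import Mathlib

/-- `e` is a common edge of `e₁` and `e₂` in `G`: `e` is an edge of `G` distinct from
`e₁, e₂` joining an endpoint of `e₁` to an endpoint of `e₂`. -/
def SimpleGraph.IsCommonEdge {V : Type*} (G : SimpleGraph V) (e e₁ e₂ : Sym2 V) : Prop :=
  e ∈ G.edgeSet ∧ e ≠ e₁ ∧ e ≠ e₂ ∧ ∃ a b, e = s(a, b) ∧ a ∈ e₁ ∧ b ∈ e₂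

/-- `D` is an edge open packing set of `G`. -/
def SimpleGraph.IsEOPSet {V : Type*} (G : SimpleGraph V) (D : Set (Sym2 V)) : Prop :=
  D ⊆ G.edgeSet ∧ ∀ e₁ ∈ D, ∀ e₂ ∈ D, e₁ ≠ e₂ → ∀ e, ¬ G.IsCommonEdge e e₁ e₂

/-- The edge open packing number `ρ_e^o(G)`. -/
noncomputable def SimpleGraph.eopNum {V : Type*} (G : SimpleGraph V) : ℕ :=
  sSup {n | ∃ D : Set (Sym2 V), G.IsEOPSet D ∧ D.ncard = n}

/-- `M` is an induced matching of `G`. -/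
def SimpleGraph.IsInducedMatching {V : Type*} (G : SimpleGraph V) (M : Set (Sym2 V)) : Prop :=
  M ⊆ G.edgeSet ∧ (∀ e₁ ∈ M, ∀ e₂ ∈ M, e₁ ≠ e₂ → ∀ v, ¬(v ∈ e₁ ∧ v ∈ e₂)) ∧
    (∀ e₁ ∈ M, ∀ e₂ ∈ M, e₁ ≠ e₂ → ∀ a b, a ∈ e₁ → b ∈ e₂ → ¬ G.Adj a b)

/-- The induced matching number of `G`. -/
noncomputable def SimpleGraph.imNum {V : Type*} (G : SimpleGraph V) : ℕ :=
  sSup {n | ∃ M : Set (Sym2 V), G.IsInducedMatching M ∧ M.ncard = n}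

namespace EOPaux

def v0 (t : ℕ) : Fin (t+3) := ⟨0, by omega⟩
def v1 (t : ℕ) : Fin (t+3) := ⟨1, by omega⟩
def v2 (t : ℕ) : Fin (t+3) := ⟨2, by omega⟩

@[simp] lemma v0_val (t : ℕ) : (v0 t).val = 0 := rfl
@[simp] lemma v1_val (t : ℕ) : (v1 t).val = 1 := rfl
@[simp] lemma v2_val (t : ℕ) : (v2 t).val = 2 := rfl

def pend (t : ℕ) : Set (Sym2 (Fin (t+3))) := (fun k => s(v0 t, k)) '' {k | 3 ≤ k.val}

variable {t : ℕ} {G : SimpleGraph (Fin (t+3))}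

def rel (t : ℕ) (x y : Fin (t+3)) : Prop :=
  (x.val = 0 ∧ y.val = 1) ∨ (x.val = 1 ∧ y.val = 2) ∨ (x.val = 0 ∧ y.val = 2) ∨
    (x.val = 0 ∧ 3 ≤ y.val)

lemma adj_iff (hG : G = SimpleGraph.fromRel (rel t)) (x y : Fin (t+3)) :
    G.Adj x y ↔ x.val ≠ y.val ∧ (x.val = 0 ∨ y.val = 0 ∨ (x.val = 1 ∧ y.val = 2) ∨
      (x.val = 2 ∧ y.val = 1)) := by
  subst hG
  rw [SimpleGraph.fromRel_adj]
  simp only [ne_eq, Fin.ext_iff, rel]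
  omega

lemma mem_pend_iff (x y : Fin (t+3)) :
    s(x,y) ∈ pend t ↔ (x.val = 0 ∧ 3 ≤ y.val) ∨ (3 ≤ x.val ∧ y.val = 0) := by
  simp only [pend, Set.mem_image, Set.mem_setOf_eq, Sym2.eq_iff]
  constructor
  · rintro ⟨k, hk, (⟨h1,h2⟩|⟨h1,h2⟩)⟩ <;> subst h1 <;> subst h2 <;> simp <;> omega
  · rintro (⟨h1,h2⟩|⟨h1,h2⟩)
    · exact ⟨y, h2, Or.inl ⟨by simp [Fin.ext_iff, h1], rfl⟩⟩
    · exact ⟨x, h1, Or.inr ⟨by simp [Fin.ext_iff, h2], rfl⟩⟩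

lemma edgeSet_eq (hG : G = SimpleGraph.fromRel (rel t)) :
    G.edgeSet = insert s(v0 t, v1 t) (insert s(v1 t, v2 t) (insert s(v0 t, v2 t) (pend t))) := by
  ext e
  induction e using Sym2.ind with
  | _ x y =>
    rw [SimpleGraph.mem_edgeSet, adj_iff hG]
    simp only [Set.mem_insert_iff, Sym2.eq_iff, mem_pend_iff, Fin.ext_iff, v0_val, v1_val, v2_val]
    omega

lemma ncard_pend : (pend t).ncard = t := by
  rw [pend, Set.ncard_image_of_injOn]
  · have : {k : Fin (t+3) | 3 ≤ k.val}
        = Set.range (fun j : Fin t => (⟨j.val + 3, by omega⟩ : Fin (t+3))) := by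
      ext k
      simp only [Set.mem_setOf_eq, Set.mem_range, Fin.ext_iff]
      constructor
      · intro h; exact ⟨⟨k.val - 3, by omega⟩, by simp; omega⟩
      · rintro ⟨j, hj⟩; omega
    rw [this, ← Set.image_univ, Set.ncard_image_of_injective _ (fun a b h => by
      simpa [Fin.ext_iff] using h), Set.ncard_univ, Nat.card_eq_fintype_card, Fintype.card_fin]
  · intro a ha b hb h
    simp only [Set.mem_setOf_eq] at ha hb
    rcases Sym2.eq_iff.mp h with ⟨_, h2⟩ | ⟨h1, h2⟩
    · exact h2
    · exfalso; rw [Fin.ext_iff] at h1 h2; simp [v0] at h1 h2; omega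

lemma not_mem_pend (u : Fin (t+3)) (hu : u.val ≤ 2) : s(v0 t, u) ∉ pend t := by
  rw [mem_pend_iff]; simp; omega

lemma ncard_insert_pend (u : Fin (t+3)) (hu : u.val ≤ 2) :
    (insert s(v0 t, u) (pend t)).ncard = t + 1 := by
  rw [Set.ncard_insert_of_notMem (not_mem_pend u hu) (Set.toFinite _), ncard_pend]

lemma ncard_edgeSet (hG : G = SimpleGraph.fromRel (rel t)) : G.edgeSet.ncard = t + 3 := by
  rw [edgeSet_eq hG]
  rw [Set.ncard_insert_of_notMem (by
      simp only [Set.mem_insert_iff, Sym2.eq_iff, Fin.ext_iff, v0_val, v1_val, v2_val,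
        mem_pend_iff]
      omega) (Set.toFinite _),
    Set.ncard_insert_of_notMem (by
      simp only [Set.mem_insert_iff, Sym2.eq_iff, Fin.ext_iff, v0_val, v1_val, v2_val,
        mem_pend_iff]
      omega) (Set.toFinite _),
    Set.ncard_insert_of_notMem (not_mem_pend _ (by simp)) (Set.toFinite _), ncard_pend]

lemma D0_shape (e : Sym2 (Fin (t+3))) (he : e ∈ insert s(v0 t, v1 t) (pend t)) :
    ∃ u : Fin (t+3), e = s(v0 t, u) ∧ (u.val = 1 ∨ 3 ≤ u.val) := by
  rcases he with rfl | ⟨k, hk, rfl⟩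
  · exact ⟨v1 t, rfl, Or.inl rfl⟩
  · exact ⟨k, rfl, Or.inr hk⟩

lemma D0_eop (hG : G = SimpleGraph.fromRel (rel t)) :
    G.IsEOPSet (insert s(v0 t, v1 t) (pend t)) := by
  constructor
  · rw [edgeSet_eq hG]
    intro e he
    rcases he with rfl | hp
    · exact Set.mem_insert _ _
    · exact Set.mem_insert_iff.mpr (Or.inr (Set.mem_insert_iff.mpr (Or.inr
        (Set.mem_insert_iff.mpr (Or.inr hp)))))
  · intro e₁ h₁ e₂ h₂ hne e hce
    obtain ⟨u₁, rfl, hu₁⟩ := D0_shape e₁ h₁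
    obtain ⟨u₂, rfl, hu₂⟩ := D0_shape e₂ h₂
    obtain ⟨hee, hne1, hne2, a, b, rfl, ha, hb⟩ := hce
    rw [SimpleGraph.mem_edgeSet, adj_iff hG] at hee
    rw [Sym2.mem_iff] at ha hb
    rcases ha with rfl | rfl <;> rcases hb with rfl | rfl
    · exact hee.1 rfl
    · exact hne2 rfl
    · exact hne1 Sym2.eq_swap
    · omega

lemma eop_le (hG : G = SimpleGraph.fromRel (rel t)) (D : Set (Sym2 (Fin (t+3))))
    (hD : G.IsEOPSet D) : D.ncard ≤ t + 1 := by
  have hmem : ∀ e ∈ D, e = s(v0 t, v1 t) ∨ e = s(v1 t, v2 t) ∨ e = s(v0 t, v2 t) ∨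
      e ∈ pend t := by
    intro e he
    have := hD.1 he
    rw [edgeSet_eq hG] at this
    simpa [Set.mem_insert_iff] using this
  by_cases hb : s(v1 t, v2 t) ∈ D
  · have hsub : D ⊆ {s(v1 t, v2 t)} := by
      intro e₂ he₂
      simp only [Set.mem_singleton_iff]
      by_contra hne
      rcases hmem e₂ he₂ with rfl | rfl | rfl | ⟨k, hk, rfl⟩
      · refine hD.2 _ hb _ he₂ (fun h => hne h.symm) s(v0 t, v2 t)
          ⟨?_, ?_, ?_, v2 t, v0 t, Sym2.eq_swap.symm, by simp, by simp⟩
        · rw [edgeSet_eq hG]; simp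
        · simp [Sym2.eq_iff, Fin.ext_iff]
        · simp [Sym2.eq_iff, Fin.ext_iff]
      · exact (hne rfl).elim
      · refine hD.2 _ hb _ he₂ (fun h => hne h.symm) s(v0 t, v1 t)
          ⟨?_, ?_, ?_, v1 t, v0 t, Sym2.eq_swap.symm, by simp, by simp⟩
        · rw [edgeSet_eq hG]; simp
        · simp [Sym2.eq_iff, Fin.ext_iff]
        · simp [Sym2.eq_iff, Fin.ext_iff]
      · simp only [Set.mem_setOf_eq] at hk
        refine hD.2 _ hb _ he₂ (fun h => hne h.symm) s(v0 t, v1 t)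
          ⟨?_, ?_, ?_, v1 t, v0 t, Sym2.eq_swap.symm, by simp, by simp⟩
        · rw [edgeSet_eq hG]; simp
        · simp [Sym2.eq_iff, Fin.ext_iff]
        · simp only [ne_eq, Sym2.eq_iff, Fin.ext_iff, v0_val, v1_val]; omega
    calc D.ncard ≤ ({s(v1 t, v2 t)} : Set _).ncard :=
          Set.ncard_le_ncard hsub (Set.toFinite _)
      _ = 1 := Set.ncard_singleton _
      _ ≤ t + 1 := by omega
  · by_cases ha : s(v0 t, v1 t) ∈ D
    · have hc : s(v0 t, v2 t) ∉ D := by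
        intro hc
        refine hD.2 _ ha _ hc (by simp [Sym2.eq_iff, Fin.ext_iff]) s(v1 t, v2 t)
          ⟨?_, ?_, ?_, v1 t, v2 t, rfl, by simp, by simp⟩
        · rw [edgeSet_eq hG]; simp
        · simp [Sym2.eq_iff, Fin.ext_iff]
        · simp [Sym2.eq_iff, Fin.ext_iff]
      have hsub : D ⊆ insert s(v0 t, v1 t) (pend t) := by
        intro e he
        rcases hmem e he with rfl | rfl | rfl | hp
        · exact Set.mem_insert _ _
        · exact (hb he).elim
        · exact (hc he).elim
        · exact Set.mem_insert_iff.mpr (Or.inr hp)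
      calc D.ncard ≤ (insert s(v0 t, v1 t) (pend t)).ncard :=
            Set.ncard_le_ncard hsub (Set.toFinite _)
        _ = t + 1 := ncard_insert_pend _ (by simp)
    · have hsub : D ⊆ insert s(v0 t, v2 t) (pend t) := by
        intro e he
        rcases hmem e he with rfl | rfl | rfl | hp
        · exact (ha he).elim
        · exact (hb he).elim
        · exact Set.mem_insert _ _
        · exact Set.mem_insert_iff.mpr (Or.inr hp)
      calc D.ncard ≤ (insert s(v0 t, v2 t) (pend t)).ncard :=
            Set.ncard_le_ncard hsub (Set.toFinite _)
        _ = t + 1 := ncard_insert_pend _ (by simp)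

end EOPaux

theorem stmt18 (t : ℕ) (G : SimpleGraph (Fin (t + 3)))
    (hG : G = SimpleGraph.fromRel (fun x y =>
      (x.val = 0 ∧ y.val = 1) ∨ (x.val = 1 ∧ y.val = 2) ∨ (x.val = 0 ∧ y.val = 2) ∨
      (x.val = 0 ∧ 3 ≤ y.val))) :
    G.eopNum = t + 1 ∧ G.eopNum = G.edgeSet.ncard - 2 := by
  have hG' : G = SimpleGraph.fromRel (EOPaux.rel t) := hG
  have key : G.eopNum = t + 1 := by
    have hmem : t + 1 ∈ {n | ∃ D : Set (Sym2 (Fin (t+3))), G.IsEOPSet D ∧ D.ncard = n} :=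
      ⟨_, EOPaux.D0_eop hG', EOPaux.ncard_insert_pend _ (by simp)⟩
    have hub : ∀ n ∈ {n | ∃ D : Set (Sym2 (Fin (t+3))), G.IsEOPSet D ∧ D.ncard = n},
        n ≤ t + 1 := by
      rintro n ⟨D, hD, rfl⟩
      exact EOPaux.eop_le hG' D hD
    rw [SimpleGraph.eopNum]
    exact le_antisymm (csSup_le ⟨_, hmem⟩ hub) (le_csSup ⟨t + 1, hub⟩ hmem)
  refine ⟨key, ?_⟩
  rw [key, EOPaux.ncard_edgeSet hG']
  omega
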